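/- If m is a smooth function with D_s m = 0, then for every j = 1,…,n one has D_s²(x_j · m) = i ∂_{y_j} m and D_s²(y_j · m) = −i ∂_{x_j} m; consequently D_s³(x_j · m) = 0 and D_s³(y_j · m) = 0, i.e. x_j m and y_j m lie in the kernel of the third power of the symplectic Dirac operator. -/

import Mathlib

noncomputable section

open Complex Finset

/-- The configuration space `ℝ^{2n} × ℝ^n`, with points `(x, y, q)` where
`x y : Fin n → ℝ` are the base variables and `q : Fin n → ℝ` the fiber variables. -/
abbrev Pt (n : ℕ) := (Fin n → ℝ) × (Fin n → ℝ) × (Fin n → ℝ)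

/-- Partial derivative with respect to `x_j`. -/
def pdx (n : ℕ) (j : Fin n) (f : Pt n → ℂ) : Pt n → ℂ := fun p =>
  deriv (fun t => f (Function.update p.1 j t, p.2.1, p.2.2)) (p.1 j)

/-- Partial derivative with respect to `y_j`. -/
def pdy (n : ℕ) (j : Fin n) (f : Pt n → ℂ) : Pt n → ℂ := fun p =>
  deriv (fun t => f (p.1, Function.update p.2.1 j t, p.2.2)) (p.2.1 j)

/-- Partial derivative with respect to `q_j`. -/
def pdq (n : ℕ) (j : Fin n) (f : Pt n → ℂ) : Pt n → ℂ := fun p =>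
  deriv (fun t => f (p.1, p.2.1, Function.update p.2.2 j t)) (p.2.2 j)

/-- The symplectic Dirac operator `D_s f = Σ_j (i q_j ∂_{y_j} f − ∂_{x_j} ∂_{q_j} f)`. -/
def Ds (n : ℕ) (f : Pt n → ℂ) : Pt n → ℂ := fun p =>
  ∑ j : Fin n, (Complex.I * (p.2.2 j : ℂ) * pdy n j f p - pdx n j (pdq n j f) p)

/-- Multiplication by the coordinate function `x_j`. -/
def mulx (n : ℕ) (j : Fin n) (f : Pt n → ℂ) : Pt n → ℂ := fun p => (p.1 j : ℂ) * f p

/-- Multiplication by the coordinate function `y_j`. -/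
def muly (n : ℕ) (j : Fin n) (f : Pt n → ℂ) : Pt n → ℂ := fun p => (p.2.1 j : ℂ) * f p

namespace DsAux

variable {n : ℕ} {f g : Pt n → ℂ}

/-! ### Basis directions and directional derivatives -/

def ex (j : Fin n) : Pt n := (Pi.single j 1, 0, 0)
def ey (j : Fin n) : Pt n := (0, Pi.single j 1, 0)
def eqv (j : Fin n) : Pt n := (0, 0, Pi.single j 1)

def Dv (v : Pt n) (f : Pt n → ℂ) : Pt n → ℂ := fun p => fderiv ℝ f p v

/-! ### Coordinate functions as continuous linear maps -/

def cX (j : Fin n) : Pt n →L[ℝ] ℂ :=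
  Complex.ofRealCLM.comp ((ContinuousLinearMap.proj j).comp (ContinuousLinearMap.fst ℝ _ _))
def cY (j : Fin n) : Pt n →L[ℝ] ℂ :=
  Complex.ofRealCLM.comp ((ContinuousLinearMap.proj j).comp
    ((ContinuousLinearMap.fst ℝ _ _).comp (ContinuousLinearMap.snd ℝ _ _)))
def cQ (j : Fin n) : Pt n →L[ℝ] ℂ :=
  Complex.ofRealCLM.comp ((ContinuousLinearMap.proj j).comp
    ((ContinuousLinearMap.snd ℝ _ _).comp (ContinuousLinearMap.snd ℝ _ _)))

theorem contDiff_cX (j : Fin n) : ContDiff ℝ (⊤ : ℕ∞) (fun p : Pt n => ((p.1 j : ℝ) : ℂ)) :=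
  (cX j).contDiff
theorem contDiff_cY (j : Fin n) : ContDiff ℝ (⊤ : ℕ∞) (fun p : Pt n => ((p.2.1 j : ℝ) : ℂ)) :=
  (cY j).contDiff
theorem contDiff_cQ (j : Fin n) : ContDiff ℝ (⊤ : ℕ∞) (fun p : Pt n => ((p.2.2 j : ℝ) : ℂ)) :=
  (cQ j).contDiff

theorem Dv_cX (j : Fin n) (v p : Pt n) :
    Dv v (fun q : Pt n => ((q.1 j : ℝ) : ℂ)) p = ((v.1 j : ℝ) : ℂ) := by
  show fderiv ℝ (cX j) p v = _
  rw [ContinuousLinearMap.fderiv]; rfl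

theorem Dv_cY (j : Fin n) (v p : Pt n) :
    Dv v (fun q : Pt n => ((q.2.1 j : ℝ) : ℂ)) p = ((v.2.1 j : ℝ) : ℂ) := by
  show fderiv ℝ (cY j) p v = _
  rw [ContinuousLinearMap.fderiv]; rfl

theorem Dv_cQ (j : Fin n) (v p : Pt n) :
    Dv v (fun q : Pt n => ((q.2.2 j : ℝ) : ℂ)) p = ((v.2.2 j : ℝ) : ℂ) := by
  show fderiv ℝ (cQ j) p v = _
  rw [ContinuousLinearMap.fderiv]; rfl

/-! ### Basic properties of `Dv` -/

theorem Dv_smooth (hf : ContDiff ℝ (⊤ : ℕ∞) f) (v : Pt n) : ContDiff ℝ (⊤ : ℕ∞) (Dv v f) :=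
  (hf.fderiv_right (le_refl _)).clm_apply contDiff_const

theorem Dv_comm (hf : ContDiff ℝ (⊤ : ℕ∞) f) (v w : Pt n) (p : Pt n) :
    Dv v (Dv w f) p = Dv w (Dv v f) p := by
  have hd : Differentiable ℝ f := hf.differentiable (by simp)
  have hd2 : Differentiable ℝ (fderiv ℝ f) :=
    (hf.fderiv_right (m := (⊤ : ℕ∞)) (le_refl _)).differentiable (by simp)
  have key : ∀ a b : Pt n, Dv a (Dv b f) p = fderiv ℝ (fderiv ℝ f) p a b := by
    intro a b
    show fderiv ℝ (fun q => fderiv ℝ f q b) p a = _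
    rw [fderiv_clm_apply (hd2 p) (differentiableAt_const b)]
    simp
  rw [key, key]
  exact second_derivative_symmetric (fun y => (hd y).hasFDerivAt) (hd2 p).hasFDerivAt v w

theorem Dv_sub {p : Pt n} (hf : DifferentiableAt ℝ f p) (hg : DifferentiableAt ℝ g p)
    (v : Pt n) :
    Dv v (fun q => f q - g q) p = Dv v f p - Dv v g p := by
  show fderiv ℝ (fun q => f q - g q) p v = _
  rw [fderiv_fun_sub hf hg]; rfl

theorem Dv_add {p : Pt n} (hf : DifferentiableAt ℝ f p) (hg : DifferentiableAt ℝ g p)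
    (v : Pt n) :
    Dv v (fun q => f q + g q) p = Dv v f p + Dv v g p := by
  show fderiv ℝ (fun q => f q + g q) p v = _
  rw [fderiv_fun_add hf hg]; rfl

theorem Dv_neg (p v : Pt n) : Dv v (fun q => -(f q)) p = -(Dv v f p) := by
  show fderiv ℝ (fun q => -(f q)) p v = _
  rw [fderiv_fun_neg]; rfl

theorem Dv_zero (p v : Pt n) : Dv v (fun _ : Pt n => (0 : ℂ)) p = 0 := by
  show fderiv ℝ (fun _ : Pt n => (0 : ℂ)) p v = _
  rw [fderiv_const_apply]; rfl

theorem Dv_const_mul (c : ℂ) {p : Pt n} (hf : DifferentiableAt ℝ f p) (v : Pt n) :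
    Dv v (fun q => c * f q) p = c * Dv v f p := by
  show fderiv ℝ (fun q => c * f q) p v = _
  rw [fderiv_const_mul hf c]; rfl

theorem Dv_mul {p : Pt n} (hg : DifferentiableAt ℝ g p) (hf : DifferentiableAt ℝ f p)
    (v : Pt n) :
    Dv v (fun q => g q * f q) p = Dv v g p * f p + g p * Dv v f p := by
  show fderiv ℝ (fun q => g q * f q) p v = _
  rw [fderiv_fun_mul hg hf]
  simp [Dv, smul_eq_mul]
  ring

theorem Dv_sum {F : Fin n → Pt n → ℂ} {p : Pt n}
    (h : ∀ k, DifferentiableAt ℝ (F k) p) (v : Pt n) :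
    Dv v (fun q => ∑ k : Fin n, F k q) p = ∑ k : Fin n, Dv v (F k) p := by
  show fderiv ℝ (fun q => ∑ k : Fin n, F k q) p v = _
  rw [fderiv_fun_sum (fun k _ => h k)]
  simp [Dv]

/-! ### `pdx`, `pdy`, `pdq` as directional derivatives -/

theorem deriv_line (hf : ContDiff ℝ (⊤ : ℕ∞) f) (p : Pt n) (e : Pt n) (t0 : ℝ) :
    deriv (fun t => f (p + (t - t0) • e)) t0 = fderiv ℝ f p e := by
  have h1 : HasDerivAt (fun t : ℝ => p + (t - t0) • e) e t0 := by
    have h := (((hasDerivAt_id t0).sub_const t0).smul_const e).const_add p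
    simpa using h
  have h0 : HasFDerivAt f (fderiv ℝ f p) (p + (t0 - t0) • e) := by
    simpa using (hf.differentiable (by simp) p).hasFDerivAt
  exact (h0.comp_hasDerivAt t0 h1).deriv

theorem pdx_eq (hf : ContDiff ℝ (⊤ : ℕ∞) f) (j : Fin n) (p : Pt n) :
    pdx n j f p = Dv (ex j) f p := by
  have hc : ∀ t : ℝ, ((Function.update p.1 j t, p.2.1, p.2.2) : Pt n)
      = p + (t - p.1 j) • ex j := by
    intro t
    refine Prod.ext ?_ (Prod.ext ?_ ?_) <;> simp [ex]
    funext i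
    rcases eq_or_ne i j with h | h
    · subst h; simp
    · simp [Function.update_of_ne h, Pi.single_apply, h]
  show deriv _ _ = _
  simp only [hc]
  exact deriv_line hf p (ex j) (p.1 j)

theorem pdy_eq (hf : ContDiff ℝ (⊤ : ℕ∞) f) (j : Fin n) (p : Pt n) :
    pdy n j f p = Dv (ey j) f p := by
  have hc : ∀ t : ℝ, ((p.1, Function.update p.2.1 j t, p.2.2) : Pt n)
      = p + (t - p.2.1 j) • ey j := by
    intro t
    refine Prod.ext ?_ (Prod.ext ?_ ?_) <;> simp [ey]
    funext i
    rcases eq_or_ne i j with h | h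
    · subst h; simp
    · simp [Function.update_of_ne h, Pi.single_apply, h]
  show deriv _ _ = _
  simp only [hc]
  exact deriv_line hf p (ey j) (p.2.1 j)

theorem pdq_eq (hf : ContDiff ℝ (⊤ : ℕ∞) f) (j : Fin n) (p : Pt n) :
    pdq n j f p = Dv (eqv j) f p := by
  have hc : ∀ t : ℝ, ((p.1, p.2.1, Function.update p.2.2 j t) : Pt n)
      = p + (t - p.2.2 j) • eqv j := by
    intro t
    refine Prod.ext ?_ (Prod.ext ?_ ?_) <;> simp [eqv]
    funext i
    rcases eq_or_ne i j with h | h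
    · subst h; simp
    · simp [Function.update_of_ne h, Pi.single_apply, h]
  show deriv _ _ = _
  simp only [hc]
  exact deriv_line hf p (eqv j) (p.2.2 j)

/-! ### The operator `T`, a convenient form of `Ds` -/

def T (f : Pt n → ℂ) : Pt n → ℂ := fun p =>
  ∑ k : Fin n, (Complex.I * (p.2.2 k : ℂ) * Dv (ey k) f p - Dv (ex k) (Dv (eqv k) f) p)

theorem term_smooth (hf : ContDiff ℝ (⊤ : ℕ∞) f) (k : Fin n) :
    ContDiff ℝ (⊤ : ℕ∞) (fun p : Pt n =>
      Complex.I * (p.2.2 k : ℂ) * Dv (ey k) f p - Dv (ex k) (Dv (eqv k) f) p) :=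
  ((contDiff_const.mul (contDiff_cQ k)).mul (Dv_smooth hf _)).sub
    (Dv_smooth (Dv_smooth hf _) _)

theorem Ds_eq (hf : ContDiff ℝ (⊤ : ℕ∞) f) : Ds n f = T f := by
  funext p
  refine Finset.sum_congr rfl fun k _ => ?_
  have h2 : pdq n k f = Dv (eqv k) f := funext fun q => pdq_eq hf k q
  rw [pdy_eq hf k p, h2, pdx_eq (Dv_smooth hf _) k p]

theorem T_neg (p : Pt n) : T (fun q => -(f q)) p = -(T f p) := by
  unfold T
  rw [← Finset.sum_neg_distrib]
  refine Finset.sum_congr rfl fun k _ => ?_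
  have h2 : Dv (eqv k) (fun q => -(f q)) = fun q => -(Dv (eqv k) f q) :=
    funext fun q => Dv_neg q (eqv k)
  rw [Dv_neg, h2, Dv_neg]
  ring

theorem T_const_mul (c : ℂ) (hf : ContDiff ℝ (⊤ : ℕ∞) f) (p : Pt n) :
    T (fun q => c * f q) p = c * T f p := by
  unfold T
  rw [Finset.mul_sum]
  refine Finset.sum_congr rfl fun k _ => ?_
  have h2 : Dv (eqv k) (fun q => c * f q) = fun q => c * Dv (eqv k) f q :=
    funext fun q => Dv_const_mul c (hf.differentiable (by simp) q) (eqv k)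
  rw [Dv_const_mul c (hf.differentiable (by simp) p), h2,
    Dv_const_mul c ((Dv_smooth hf _).differentiable (by simp) p)]
  ring

theorem sum_delta (g : Fin n → ℂ) (j : Fin n) :
    ∑ k : Fin n, ((Pi.single (M := fun _ : Fin n => ℝ) j 1 k : ℝ) : ℂ) * g k = g j := by
  rw [Finset.sum_eq_single j]
  · simp
  · intro k _ hk; simp [Pi.single_apply, hk]
  · intro h; exact absurd (Finset.mem_univ j) h

theorem sum_delta' (g : Fin n → ℂ) (j : Fin n) :
    ∑ k : Fin n, ((Pi.single (M := fun _ : Fin n => ℝ) k 1 j : ℝ) : ℂ) * g k = g j := by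
  rw [Finset.sum_eq_single j]
  · simp
  · intro k _ hk; simp [Pi.single_apply, Ne.symm hk]
  · intro h; exact absurd (Finset.mem_univ j) h

/-! ### Commutators of `T` with coordinate multiplications -/

theorem T_mulx (hf : ContDiff ℝ (⊤ : ℕ∞) f) (j : Fin n) (p : Pt n) :
    T (fun q => (q.1 j : ℂ) * f q) p = (p.1 j : ℂ) * T f p - Dv (eqv j) f p := by
  have hdf : Differentiable ℝ f := hf.differentiable (by simp)
  have hX : ∀ q : Pt n, DifferentiableAt ℝ (fun q : Pt n => ((q.1 j : ℝ) : ℂ)) q :=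
    fun q => (contDiff_cX j).differentiable (by simp) q
  have key : ∀ k : Fin n,
      Complex.I * (p.2.2 k : ℂ) * Dv (ey k) (fun q => (q.1 j : ℂ) * f q) p
        - Dv (ex k) (Dv (eqv k) (fun q => (q.1 j : ℂ) * f q)) p
      = (p.1 j : ℂ) * (Complex.I * (p.2.2 k : ℂ) * Dv (ey k) f p
          - Dv (ex k) (Dv (eqv k) f) p)
        - ((Pi.single (M := fun _ : Fin n => ℝ) k 1 j : ℝ) : ℂ) * Dv (eqv k) f p := by
    intro k
    have h1 : Dv (ey k) (fun q => (q.1 j : ℂ) * f q) p = (p.1 j : ℂ) * Dv (ey k) f p := by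
      rw [Dv_mul (hX p) (hdf p), Dv_cX]
      simp [ey]
    have h2 : Dv (eqv k) (fun q => (q.1 j : ℂ) * f q)
        = fun q => (q.1 j : ℂ) * Dv (eqv k) f q := by
      funext q
      rw [Dv_mul (hX q) (hdf q), Dv_cX]
      simp [eqv]
    have h3 : Dv (ex k) (fun q => (q.1 j : ℂ) * Dv (eqv k) f q) p
        = ((Pi.single (M := fun _ : Fin n => ℝ) k 1 j : ℝ) : ℂ) * Dv (eqv k) f p
          + (p.1 j : ℂ) * Dv (ex k) (Dv (eqv k) f) p := by
      rw [Dv_mul (hX p) ((Dv_smooth hf _).differentiable (by simp) p), Dv_cX]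
      rfl
    rw [h1, h2, h3]
    ring
  unfold T
  rw [Finset.sum_congr rfl fun k _ => key k, Finset.sum_sub_distrib, ← Finset.mul_sum,
    sum_delta' (fun k => Dv (eqv k) f p) j]

theorem T_muly (hf : ContDiff ℝ (⊤ : ℕ∞) f) (j : Fin n) (p : Pt n) :
    T (fun q => (q.2.1 j : ℂ) * f q) p
      = (p.2.1 j : ℂ) * T f p + Complex.I * (p.2.2 j : ℂ) * f p := by
  have hdf : Differentiable ℝ f := hf.differentiable (by simp)
  have hY : ∀ q : Pt n, DifferentiableAt ℝ (fun q : Pt n => ((q.2.1 j : ℝ) : ℂ)) q :=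
    fun q => (contDiff_cY j).differentiable (by simp) q
  have key : ∀ k : Fin n,
      Complex.I * (p.2.2 k : ℂ) * Dv (ey k) (fun q => (q.2.1 j : ℂ) * f q) p
        - Dv (ex k) (Dv (eqv k) (fun q => (q.2.1 j : ℂ) * f q)) p
      = (p.2.1 j : ℂ) * (Complex.I * (p.2.2 k : ℂ) * Dv (ey k) f p
          - Dv (ex k) (Dv (eqv k) f) p)
        + ((Pi.single (M := fun _ : Fin n => ℝ) k 1 j : ℝ) : ℂ)
            * (Complex.I * (p.2.2 k : ℂ) * f p) := by
    intro k
    have h1 : Dv (ey k) (fun q => (q.2.1 j : ℂ) * f q) p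
        = ((Pi.single (M := fun _ : Fin n => ℝ) k 1 j : ℝ) : ℂ) * f p
          + (p.2.1 j : ℂ) * Dv (ey k) f p := by
      rw [Dv_mul (hY p) (hdf p), Dv_cY]
      rfl
    have h2 : Dv (eqv k) (fun q => (q.2.1 j : ℂ) * f q)
        = fun q => (q.2.1 j : ℂ) * Dv (eqv k) f q := by
      funext q
      rw [Dv_mul (hY q) (hdf q), Dv_cY]
      simp [eqv]
    have h3 : Dv (ex k) (fun q => (q.2.1 j : ℂ) * Dv (eqv k) f q) p
        = (p.2.1 j : ℂ) * Dv (ex k) (Dv (eqv k) f) p := by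
      rw [Dv_mul (hY p) ((Dv_smooth hf _).differentiable (by simp) p), Dv_cY]
      simp [ex]
    rw [h1, h2, h3]
    ring
  unfold T
  rw [Finset.sum_congr rfl fun k _ => key k, Finset.sum_add_distrib, ← Finset.mul_sum,
    sum_delta' (fun k => Complex.I * (p.2.2 k : ℂ) * f p) j]

theorem T_mulq (hf : ContDiff ℝ (⊤ : ℕ∞) f) (j : Fin n) (p : Pt n) :
    T (fun q => (q.2.2 j : ℂ) * f q) p = (p.2.2 j : ℂ) * T f p - Dv (ex j) f p := by
  have hdf : Differentiable ℝ f := hf.differentiable (by simp)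
  have hQ : ∀ q : Pt n, DifferentiableAt ℝ (fun q : Pt n => ((q.2.2 j : ℝ) : ℂ)) q :=
    fun q => (contDiff_cQ j).differentiable (by simp) q
  have key : ∀ k : Fin n,
      Complex.I * (p.2.2 k : ℂ) * Dv (ey k) (fun q => (q.2.2 j : ℂ) * f q) p
        - Dv (ex k) (Dv (eqv k) (fun q => (q.2.2 j : ℂ) * f q)) p
      = (p.2.2 j : ℂ) * (Complex.I * (p.2.2 k : ℂ) * Dv (ey k) f p
          - Dv (ex k) (Dv (eqv k) f) p)
        - ((Pi.single (M := fun _ : Fin n => ℝ) k 1 j : ℝ) : ℂ) * Dv (ex k) f p := by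
    intro k
    have h1 : Dv (ey k) (fun q => (q.2.2 j : ℂ) * f q) p
        = (p.2.2 j : ℂ) * Dv (ey k) f p := by
      rw [Dv_mul (hQ p) (hdf p), Dv_cQ]
      simp [ey]
    have h2 : Dv (eqv k) (fun q => (q.2.2 j : ℂ) * f q)
        = fun q => ((Pi.single (M := fun _ : Fin n => ℝ) k 1 j : ℝ) : ℂ) * f q
            + (q.2.2 j : ℂ) * Dv (eqv k) f q := by
      funext q
      rw [Dv_mul (hQ q) (hdf q), Dv_cQ]
      rfl
    have h3 : Dv (ex k)
        (fun q => ((Pi.single (M := fun _ : Fin n => ℝ) k 1 j : ℝ) : ℂ) * f q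
            + (q.2.2 j : ℂ) * Dv (eqv k) f q) p
        = ((Pi.single (M := fun _ : Fin n => ℝ) k 1 j : ℝ) : ℂ) * Dv (ex k) f p
          + (p.2.2 j : ℂ) * Dv (ex k) (Dv (eqv k) f) p := by
      have d1 : DifferentiableAt ℝ
          (fun q : Pt n => ((Pi.single (M := fun _ : Fin n => ℝ) k 1 j : ℝ) : ℂ) * f q) p :=
        (contDiff_const.mul hf).differentiable (by simp) p
      have d2 : DifferentiableAt ℝ
          (fun q : Pt n => (q.2.2 j : ℂ) * Dv (eqv k) f q) p :=
        ((contDiff_cQ j).mul (Dv_smooth hf _)).differentiable (by simp) p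
      rw [Dv_add d1 d2, Dv_const_mul _ (hdf p),
        Dv_mul (hQ p) ((Dv_smooth hf _).differentiable (by simp) p), Dv_cQ]
      have : ((((ex k).2.2 j : ℝ)) : ℂ) = 0 := by simp [ex]
      rw [this]
      ring
    rw [h1, h2, h3]
    ring
  unfold T
  rw [Finset.sum_congr rfl fun k _ => key k, Finset.sum_sub_distrib, ← Finset.mul_sum,
    sum_delta' (fun k => Dv (ex k) f p) j]

/-! ### Commutators of `T` with directional derivatives -/

theorem Dv_term (hf : ContDiff ℝ (⊤ : ℕ∞) f) (k : Fin n) (v p : Pt n) :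
    Dv v (fun q => Complex.I * (q.2.2 k : ℂ) * Dv (ey k) f q
        - Dv (ex k) (Dv (eqv k) f) q) p
    = Complex.I * ((v.2.2 k : ℝ) : ℂ) * Dv (ey k) f p
      + Complex.I * (p.2.2 k : ℂ) * Dv v (Dv (ey k) f) p
      - Dv v (Dv (ex k) (Dv (eqv k) f)) p := by
  have d1 : DifferentiableAt ℝ
      (fun q : Pt n => Complex.I * (q.2.2 k : ℂ) * Dv (ey k) f q) p :=
    ((contDiff_const.mul (contDiff_cQ k)).mul (Dv_smooth hf _)).differentiable (by simp) p
  have d2 : DifferentiableAt ℝ (Dv (ex k) (Dv (eqv k) f)) p :=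
    (Dv_smooth (Dv_smooth hf _) _).differentiable (by simp) p
  rw [Dv_sub d1 d2]
  have e : (fun q : Pt n => Complex.I * (q.2.2 k : ℂ) * Dv (ey k) f q)
      = fun q => Complex.I * ((q.2.2 k : ℂ) * Dv (ey k) f q) := by
    funext q; ring
  rw [e, Dv_const_mul _ (((contDiff_cQ k).mul (Dv_smooth hf _)).differentiable (by simp) p),
    Dv_mul ((contDiff_cQ k).differentiable (by simp) p)
      ((Dv_smooth hf _).differentiable (by simp) p), Dv_cQ]
  ring

theorem T_Dq (hf : ContDiff ℝ (⊤ : ℕ∞) f) (j : Fin n) (p : Pt n) :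
    T (Dv (eqv j) f) p = Dv (eqv j) (T f) p - Complex.I * Dv (ey j) f p := by
  have hsum : Dv (eqv j) (T f) p
      = ∑ k : Fin n, Dv (eqv j) (fun q => Complex.I * (q.2.2 k : ℂ) * Dv (ey k) f q
          - Dv (ex k) (Dv (eqv k) f) q) p :=
    Dv_sum (fun k => (term_smooth hf k).differentiable (by simp) p) (eqv j)
  have key : ∀ k : Fin n,
      Complex.I * (p.2.2 k : ℂ) * Dv (ey k) (Dv (eqv j) f) p
        - Dv (ex k) (Dv (eqv k) (Dv (eqv j) f)) p
      = Dv (eqv j) (fun q => Complex.I * (q.2.2 k : ℂ) * Dv (ey k) f q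
            - Dv (ex k) (Dv (eqv k) f) q) p
        - ((Pi.single (M := fun _ : Fin n => ℝ) j 1 k : ℝ) : ℂ)
            * (Complex.I * Dv (ey k) f p) := by
    intro k
    have a1 : Dv (ey k) (Dv (eqv j) f) p = Dv (eqv j) (Dv (ey k) f) p := Dv_comm hf _ _ p
    have a2 : Dv (eqv k) (Dv (eqv j) f) = Dv (eqv j) (Dv (eqv k) f) :=
      funext fun q => Dv_comm hf _ _ q
    have a3 : Dv (ex k) (Dv (eqv j) (Dv (eqv k) f)) p
        = Dv (eqv j) (Dv (ex k) (Dv (eqv k) f)) p := Dv_comm (Dv_smooth hf _) _ _ p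
    rw [a1, a2, a3, Dv_term hf k (eqv j) p]
    have : (((eqv j).2.2 k : ℝ) : ℂ)
        = ((Pi.single (M := fun _ : Fin n => ℝ) j 1 k : ℝ) : ℂ) := rfl
    rw [this]
    ring
  unfold T
  rw [Finset.sum_congr rfl fun k _ => key k, Finset.sum_sub_distrib,
    sum_delta (fun k => Complex.I * Dv (ey k) f p) j]
  unfold T at hsum
  rw [hsum]

theorem T_Dy (hf : ContDiff ℝ (⊤ : ℕ∞) f) (j : Fin n) (p : Pt n) :
    T (Dv (ey j) f) p = Dv (ey j) (T f) p := by
  have hsum : Dv (ey j) (T f) p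
      = ∑ k : Fin n, Dv (ey j) (fun q => Complex.I * (q.2.2 k : ℂ) * Dv (ey k) f q
          - Dv (ex k) (Dv (eqv k) f) q) p :=
    Dv_sum (fun k => (term_smooth hf k).differentiable (by simp) p) (ey j)
  have key : ∀ k : Fin n,
      Complex.I * (p.2.2 k : ℂ) * Dv (ey k) (Dv (ey j) f) p
        - Dv (ex k) (Dv (eqv k) (Dv (ey j) f)) p
      = Dv (ey j) (fun q => Complex.I * (q.2.2 k : ℂ) * Dv (ey k) f q
            - Dv (ex k) (Dv (eqv k) f) q) p := by
    intro k
    have a1 : Dv (ey k) (Dv (ey j) f) p = Dv (ey j) (Dv (ey k) f) p := Dv_comm hf _ _ p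
    have a2 : Dv (eqv k) (Dv (ey j) f) = Dv (ey j) (Dv (eqv k) f) :=
      funext fun q => Dv_comm hf _ _ q
    have a3 : Dv (ex k) (Dv (ey j) (Dv (eqv k) f)) p
        = Dv (ey j) (Dv (ex k) (Dv (eqv k) f)) p := Dv_comm (Dv_smooth hf _) _ _ p
    rw [a1, a2, a3, Dv_term hf k (ey j) p]
    have : (((ey j).2.2 k : ℝ) : ℂ) = 0 := by simp [ey]
    rw [this]
    ring
  unfold T
  rw [Finset.sum_congr rfl fun k _ => key k]
  unfold T at hsum
  rw [hsum]

theorem T_Dx (hf : ContDiff ℝ (⊤ : ℕ∞) f) (j : Fin n) (p : Pt n) :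
    T (Dv (ex j) f) p = Dv (ex j) (T f) p := by
  have hsum : Dv (ex j) (T f) p
      = ∑ k : Fin n, Dv (ex j) (fun q => Complex.I * (q.2.2 k : ℂ) * Dv (ey k) f q
          - Dv (ex k) (Dv (eqv k) f) q) p :=
    Dv_sum (fun k => (term_smooth hf k).differentiable (by simp) p) (ex j)
  have key : ∀ k : Fin n,
      Complex.I * (p.2.2 k : ℂ) * Dv (ey k) (Dv (ex j) f) p
        - Dv (ex k) (Dv (eqv k) (Dv (ex j) f)) p
      = Dv (ex j) (fun q => Complex.I * (q.2.2 k : ℂ) * Dv (ey k) f q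
            - Dv (ex k) (Dv (eqv k) f) q) p := by
    intro k
    have a1 : Dv (ey k) (Dv (ex j) f) p = Dv (ex j) (Dv (ey k) f) p := Dv_comm hf _ _ p
    have a2 : Dv (eqv k) (Dv (ex j) f) = Dv (ex j) (Dv (eqv k) f) :=
      funext fun q => Dv_comm hf _ _ q
    have a3 : Dv (ex k) (Dv (ex j) (Dv (eqv k) f)) p
        = Dv (ex j) (Dv (ex k) (Dv (eqv k) f)) p := Dv_comm (Dv_smooth hf _) _ _ p
    rw [a1, a2, a3, Dv_term hf k (ex j) p]
    have : (((ex j).2.2 k : ℝ) : ℂ) = 0 := by simp [ex]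
    rw [this]
    ring
  unfold T
  rw [Finset.sum_congr rfl fun k _ => key k]
  unfold T at hsum
  rw [hsum]

end DsAux

open DsAux

/-- If `m` is a smooth symplectic monogenic (`D_s m = 0`), then
`D_s²(x_j m) = i ∂_{y_j} m`, `D_s²(y_j m) = −i ∂_{x_j} m`, and consequently
`x_j m` and `y_j m` lie in the kernel of `D_s³`. -/
theorem Ds_sq_coord_mul (n : ℕ) (hn : 1 ≤ n) (m : Pt n → ℂ) (hm : ContDiff ℝ (⊤ : ℕ∞) m)
    (hker : ∀ p, Ds n m p = 0) (j : Fin n) :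
    (∀ p, Ds n (Ds n (mulx n j m)) p = Complex.I * pdy n j m p) ∧
    (∀ p, Ds n (Ds n (muly n j m)) p = -Complex.I * pdx n j m p) ∧
    (∀ p, Ds n (Ds n (Ds n (mulx n j m))) p = 0) ∧
    (∀ p, Ds n (Ds n (Ds n (muly n j m))) p = 0) := by
  have hT0 : T m = fun _ : Pt n => (0 : ℂ) := by
    funext p
    show T m p = 0
    rw [← Ds_eq hm]
    exact hker p
  have e1 : mulx n j m = fun q : Pt n => (q.1 j : ℂ) * m q := rfl
  have e2 : muly n j m = fun q : Pt n => (q.2.1 j : ℂ) * m q := rfl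
  have hmx : ContDiff ℝ (⊤ : ℕ∞) (mulx n j m) := by rw [e1]; exact (contDiff_cX j).mul hm
  have hmy : ContDiff ℝ (⊤ : ℕ∞) (muly n j m) := by rw [e2]; exact (contDiff_cY j).mul hm
  have hx1 : Ds n (mulx n j m) = fun p => -(Dv (eqv j) m p) := by
    rw [Ds_eq hmx]
    funext p
    rw [e1, T_mulx hm j p, hT0]
    simp
  have hy1 : Ds n (muly n j m) = fun p : Pt n => Complex.I * (p.2.2 j : ℂ) * m p := by
    rw [Ds_eq hmy]
    funext p
    rw [e2, T_muly hm j p, hT0]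
    simp
  have hx2 : Ds n (Ds n (mulx n j m)) = fun p => Complex.I * Dv (ey j) m p := by
    rw [hx1, Ds_eq ((Dv_smooth hm (eqv j)).neg)]
    funext p
    rw [T_neg, T_Dq hm j p, hT0, Dv_zero]
    ring
  have hy2 : Ds n (Ds n (muly n j m)) = fun p => -Complex.I * Dv (ex j) m p := by
    rw [hy1, Ds_eq ((contDiff_const.mul (contDiff_cQ j)).mul hm)]
    funext p
    have e : (fun q : Pt n => Complex.I * (q.2.2 j : ℂ) * m q)
        = fun q => Complex.I * ((q.2.2 j : ℂ) * m q) := by funext q; ring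
    rw [e, T_const_mul _ ((contDiff_cQ j).mul hm) p, T_mulq hm j p, hT0]
    simp
  have hx3 : ∀ p, Ds n (Ds n (Ds n (mulx n j m))) p = 0 := by
    intro p
    rw [hx2, Ds_eq (contDiff_const.mul (Dv_smooth hm (ey j)))]
    show T (fun p => Complex.I * Dv (ey j) m p) p = 0
    rw [T_const_mul _ (Dv_smooth hm (ey j)) p, T_Dy hm j p, hT0, Dv_zero]
    simp
  have hy3 : ∀ p, Ds n (Ds n (Ds n (muly n j m))) p = 0 := by
    intro p
    rw [hy2, Ds_eq (contDiff_const.mul (Dv_smooth hm (ex j)))]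
    show T (fun p => -Complex.I * Dv (ex j) m p) p = 0
    rw [T_const_mul _ (Dv_smooth hm (ex j)) p, T_Dx hm j p, hT0, Dv_zero]
    simp
  refine ⟨fun p => ?_, fun p => ?_, hx3, hy3⟩
  · rw [hx2, pdy_eq hm j p]
  · rw [hy2, pdx_eq hm j p]
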